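/- If f : [a,b] → ℝ is differentiable with f' absolutely continuous on [a,b], a < b, and M is a real number such that f''(t) ≤ M for almost every t ∈ [a,b], then |∫_a^b f(t) dt − (b−a)/90 · (7f(a) + 32f((3a+b)/4) + 12f((a+b)/2) + 32f((a+3b)/4) + 7f(b))| ≤ (17/1440) · (M − (f'(b)−f'(a))/(b−a)) · (b−a)³. -/

import Mathlib

/-!
Peano kernel argument. Taylor's formula with integral remainder, `f x = f a + f' a (x - a) +
∫_a^b (x - t)₊ f'' t dt`, together with Fubini, writes the error of a quadrature rule that is exact
on linear functions as `∫_a^b K t f'' t dt`, where `K t` is the error of the rule on `x ↦ (x - t)₊`.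
Boole's rule is exact on quadratics, so `∫ K = 0` and the error equals `∫ K (f'' - M)`; since
`f'' ≤ M` and `|K| ≤ 17 (b - a)² / 1440`, it is bounded by
`17 (b - a)² / 1440 · ∫ (M - f'') = 17 (b - a)² / 1440 · (M (b - a) - (f' b - f' a))`.
-/

open MeasureTheory intervalIntegral Set

theorem integral_integral_swap_triangle {a b : ℝ} (hab : a ≤ b) {k : ℝ → ℝ → ℝ}
    (hk : Continuous (Function.uncurry k)) {g : ℝ → ℝ} (hg : IntervalIntegrable g volume a b) :
    ∫ x in a..b, ∫ t in a..x, k x t * g t = ∫ t in a..b, (∫ x in t..b, k x t) * g t := by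
  set μ := volume.restrict (Ioc a b)
  have hg' : Integrable g μ := (intervalIntegrable_iff_integrableOn_Ioc_of_le hab).1 hg
  obtain ⟨C, hC⟩ := (isCompact_Icc.prod isCompact_Icc).exists_bound_of_continuousOn
    (hk.continuousOn (s := Icc a b ×ˢ Icc a b))
  -- Fubini on the square, for the integrand extended by zero off the triangle `t ≤ x`.
  set F : ℝ × ℝ → ℝ := {z | z.2 ≤ z.1}.indicator fun z => k z.1 z.2 * g z.2 with hF
  have hF_int : Integrable F (μ.prod μ) := by
    have hmem : ∀ᵐ z ∂μ.prod μ, z ∈ Ioc a b ×ˢ Ioc a b := by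
      rw [Measure.prod_restrict]
      exact ae_restrict_mem (measurableSet_Ioc.prod measurableSet_Ioc)
    refine ((integrable_const C).mul_prod hg'.norm).mono'
      ((hk.aestronglyMeasurable.mul hg'.aestronglyMeasurable.comp_snd).indicator
        (measurableSet_le measurable_snd measurable_fst)) ?_
    filter_upwards [hmem] with z hz
    calc ‖F z‖ ≤ ‖k z.1 z.2 * g z.2‖ := norm_indicator_le_norm_self _ _
      _ ≤ C * ‖g z.2‖ := by
        rw [norm_mul]
        exact mul_le_mul_of_nonneg_right
          (hC z ⟨Ioc_subset_Icc_self hz.1, Ioc_subset_Icc_self hz.2⟩) (norm_nonneg _)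
  have hinner_left : ∀ x ∈ Ioc a b, ∫ t in a..x, k x t * g t = ∫ t, F (x, t) ∂μ := by
    intro x hx
    have hslice : (fun t => F (x, t)) = (Iic x).indicator fun t => k x t * g t := by
      ext t; by_cases h : t ≤ x <;> simp [hF, h]
    rw [hslice, setIntegral_indicator measurableSet_Iic, Ioc_inter_Iic, min_eq_right hx.2,
      integral_of_le hx.1.le]
  have hinner_right : ∀ t ∈ Ioc a b, (∫ x in t..b, k x t) * g t = ∫ x, F (x, t) ∂μ := by
    intro t ht
    have hslice : (fun x => F (x, t)) = (Ici t).indicator fun x => k x t * g t := by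
      ext x; by_cases h : t ≤ x <;> simp [hF, h]
    have hIcc : Ioc a b ∩ Ici t = Icc t b := by
      ext x; simp only [mem_inter_iff, mem_Ioc, mem_Ici, mem_Icc]; grind [ht.1]
    rw [hslice, setIntegral_indicator measurableSet_Ici, hIcc, integral_Icc_eq_integral_Ioc,
      ← integral_of_le ht.2, intervalIntegral.integral_mul_const]
  rw [integral_of_le hab, integral_of_le hab, setIntegral_congr_fun measurableSet_Ioc hinner_left,
    setIntegral_congr_fun measurableSet_Ioc hinner_right]
  exact integral_integral_swap hF_int

section TaylorOrderOne

variable {a b : ℝ} {f f' f'' : ℝ → ℝ}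

theorem integral_max_sub_mul {c : ℝ} (hac : a ≤ c) (hcb : c ≤ b) {g : ℝ → ℝ}
    (hg : IntervalIntegrable g volume a b) :
    ∫ t in a..b, max (c - t) 0 * g t = ∫ t in a..c, (c - t) * g t := by
  have hint : IntervalIntegrable (fun t => max (c - t) 0 * g t) volume a b :=
    hg.continuousOn_mul (by fun_prop)
  have hc : c ∈ uIcc a b := by rw [uIcc_of_le (hac.trans hcb)]; exact ⟨hac, hcb⟩
  have hleft : EqOn (fun t => max (c - t) 0 * g t) (fun t => (c - t) * g t) (uIcc a c) := by
    intro t ht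
    rw [uIcc_of_le hac] at ht
    simp [ht.2]
  have hright : EqOn (fun t => max (c - t) 0 * g t) (fun _ => 0) (uIcc c b) := by
    intro t ht
    rw [uIcc_of_le hcb] at ht
    simp [ht.1]
  rw [← integral_add_adjacent_intervals (hint.mono_set (uIcc_subset_uIcc left_mem_uIcc hc))
    (hint.mono_set (uIcc_subset_uIcc hc right_mem_uIcc)), integral_congr hleft,
    integral_congr hright, intervalIntegral.integral_zero, add_zero]

variable (hderiv : ∀ x ∈ Icc a b, HasDerivAt f (f' x) x)
  (hf'' : IntervalIntegrable f'' volume a b) (hac : ∀ x ∈ Icc a b, f' x - f' a = ∫ t in a..x, f'' t)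
include hderiv hf'' hac

theorem taylor_one_integral_remainder {x : ℝ} (hx : x ∈ Icc a b) :
    f x = f a + f' a * (x - a) + ∫ t in a..x, (x - t) * f'' t := by
  have hsub : uIcc a x ⊆ Icc a b := by rw [uIcc_of_le hx.1]; exact Icc_subset_Icc_right hx.2
  have hf''x : IntervalIntegrable f'' volume a x :=
    hf''.mono_set (hsub.trans (by rw [uIcc_of_le (hx.1.trans hx.2)]))
  have hP : ContinuousOn (fun y => ∫ t in a..y, f'' t) (uIcc a x) :=
    continuousOn_primitive_interval' hf''x left_mem_uIcc
  have hf' : EqOn f' (fun y => f' a + ∫ t in a..y, f'' t) (uIcc a x) := fun y hy => by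
    linarith [hac y (hsub hy)]
  have hFTC : ∫ y in a..x, f' y = f x - f a :=
    integral_eq_sub_of_hasDerivAt (fun y hy => hderiv y (hsub hy))
      ((continuousOn_const.add hP).congr hf').intervalIntegrable
  have hswap : ∫ y in a..x, ∫ t in a..y, f'' t = ∫ t in a..x, (x - t) * f'' t := by
    simpa using integral_integral_swap_triangle hx.1 (k := fun _ _ => 1) continuous_const hf''x
  rw [integral_congr hf', integral_add intervalIntegrable_const hP.intervalIntegrable, hswap,
    intervalIntegral.integral_const, smul_eq_mul] at hFTC
  linarith

theorem eq_add_integral_max_sub_mul {x : ℝ} (hx : x ∈ Icc a b) :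
    f x = f a + f' a * (x - a) + ∫ t in a..b, max (x - t) 0 * f'' t := by
  rw [integral_max_sub_mul hx.1 hx.2 hf'']
  exact taylor_one_integral_remainder hderiv hf'' hac hx

theorem integral_eq_add_integral_sq_mul (hab : a ≤ b) :
    ∫ x in a..b, f x = f a * (b - a) + f' a * ((b - a) ^ 2 / 2)
      + ∫ t in a..b, (b - t) ^ 2 / 2 * f'' t := by
  have hf : IntervalIntegrable f volume a b := ContinuousOn.intervalIntegrable fun x hx =>
    (hderiv x (uIcc_of_le hab ▸ hx)).continuousAt.continuousWithinAt
  have hlin : IntervalIntegrable (fun x => f a + f' a * (x - a)) volume a b := by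
    apply Continuous.intervalIntegrable; fun_prop
  have hremainder : ∫ x in a..b, (f x - (f a + f' a * (x - a)))
      = ∫ x in a..b, ∫ t in a..x, (x - t) * f'' t := by
    refine integral_congr fun x hx => ?_
    rw [taylor_one_integral_remainder hderiv hf'' hac (uIcc_of_le hab ▸ hx)]
    ring
  have hswap : ∫ x in a..b, ∫ t in a..x, (x - t) * f'' t
      = ∫ t in a..b, (b - t) ^ 2 / 2 * f'' t := by
    rw [integral_integral_swap_triangle hab (k := fun x t => x - t) (by fun_prop) hf'']
    refine integral_congr fun t _ => ?_
    simp [intervalIntegral.integral_comp_sub_right fun x => x]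
  have hlin_eq : ∫ x in a..b, (f a + f' a * (x - a))
      = f a * (b - a) + f' a * ((b - a) ^ 2 / 2) := by
    rw [integral_add intervalIntegrable_const (by apply Continuous.intervalIntegrable; fun_prop)]
    simp only [intervalIntegral.integral_const, smul_eq_mul, intervalIntegral.integral_const_mul,
      intervalIntegrable_id, intervalIntegrable_const, intervalIntegral.integral_sub, integral_id]
    ring
  rw [integral_sub hf hlin, hswap, hlin_eq] at hremainder
  linarith

end TaylorOrderOne

section PeanoKernel

variable {ι : Type*} (s : Finset ι) (w ξ : ι → ℝ)

/-- Since `∫_a^b (x - t)₊ dx = (b - t)² / 2` for `t ≥ a`, on `[a, b]` this is the error of the rule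
`f ↦ ∑ i ∈ s, w i * f (ξ i)` on `x ↦ (x - t)₊`. -/
noncomputable def peanoKernel (b t : ℝ) : ℝ :=
  (b - t) ^ 2 / 2 - ∑ i ∈ s, w i * max (ξ i - t) 0

theorem continuous_peanoKernel (b : ℝ) : Continuous (peanoKernel s w ξ b) := by
  unfold peanoKernel; fun_prop

variable {s w ξ} {a b : ℝ} {f f' f'' : ℝ → ℝ}

theorem integral_sub_sum_eq_integral_peanoKernel_mul (hab : a ≤ b)
    (hξ : ∀ i ∈ s, ξ i ∈ Icc a b) (hw : ∑ i ∈ s, w i = b - a)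
    (hwξ : ∑ i ∈ s, w i * (ξ i - a) = (b - a) ^ 2 / 2)
    (hderiv : ∀ x ∈ Icc a b, HasDerivAt f (f' x) x) (hf'' : IntervalIntegrable f'' volume a b)
    (hac : ∀ x ∈ Icc a b, f' x - f' a = ∫ t in a..x, f'' t) :
    (∫ t in a..b, f t) - ∑ i ∈ s, w i * f (ξ i) = ∫ t in a..b, peanoKernel s w ξ b t * f'' t := by
  have hint (φ : ℝ → ℝ) (hφ : Continuous φ) :
      IntervalIntegrable (fun t => φ t * f'' t) volume a b :=
    hf''.continuousOn_mul hφ.continuousOn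
  have hnodes : ∑ i ∈ s, w i * f (ξ i) = f a * (b - a) + f' a * ((b - a) ^ 2 / 2)
      + ∑ i ∈ s, w i * ∫ t in a..b, max (ξ i - t) 0 * f'' t := by
    rw [← hwξ, ← hw, Finset.mul_sum, Finset.mul_sum, ← Finset.sum_add_distrib,
      ← Finset.sum_add_distrib]
    refine Finset.sum_congr rfl fun i hi => ?_
    rw [eq_add_integral_max_sub_mul hderiv hf'' hac (hξ i hi)]
    ring
  have hkernel : ∫ t in a..b, peanoKernel s w ξ b t * f'' t
      = (∫ t in a..b, (b - t) ^ 2 / 2 * f'' t)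
        - ∑ i ∈ s, w i * ∫ t in a..b, max (ξ i - t) 0 * f'' t := by
    simp only [peanoKernel, sub_mul]
    rw [integral_sub (hint _ (by fun_prop)) (hint _ (by fun_prop))]
    simp only [Finset.sum_mul, mul_assoc]
    rw [integral_finsetSum fun i _ => (hint _ (by fun_prop)).const_mul (w i)]
    simp only [intervalIntegral.integral_const_mul]
  rw [integral_eq_add_integral_sq_mul hderiv hf'' hac hab, hnodes, hkernel]
  ring

theorem integral_peanoKernel (hab : a ≤ b) (hξ : ∀ i ∈ s, ξ i ∈ Icc a b)
    (hw : ∑ i ∈ s, w i = b - a) (hwξ : ∑ i ∈ s, w i * (ξ i - a) = (b - a) ^ 2 / 2) :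
    ∫ t in a..b, peanoKernel s w ξ b t = (b - a) ^ 3 / 6 - ∑ i ∈ s, w i * ((ξ i - a) ^ 2 / 2) := by
  have h := integral_sub_sum_eq_integral_peanoKernel_mul (f := fun y => (y - a) ^ 2 / 2)
    (f' := fun y => y - a) (f'' := fun _ => 1) hab hξ hw hwξ
    (fun y _ => by simpa using (((hasDerivAt_id y).sub_const a).pow 2).div_const 2)
    intervalIntegrable_const (fun y _ => by simp)
  simp only [mul_one] at h
  rw [← h, intervalIntegral.integral_div, intervalIntegral.integral_comp_sub_right fun y => y ^ 2,
    integral_pow, sub_self]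
  ring

end PeanoKernel

theorem abs_integral_mul_le_of_integral_eq_zero {a b C M : ℝ} {K g : ℝ → ℝ} (hab : a ≤ b)
    (hK : ContinuousOn K (Icc a b)) (hK0 : ∫ t in a..b, K t = 0)
    (hKC : ∀ t ∈ Icc a b, |K t| ≤ C) (hg : IntervalIntegrable g volume a b)
    (hgM : ∀ᵐ t, t ∈ Icc a b → g t ≤ M) :
    |∫ t in a..b, K t * g t| ≤ C * (M * (b - a) - ∫ t in a..b, g t) := by
  rw [← uIcc_of_le hab] at hK
  have hshift : ∫ t in a..b, K t * g t = ∫ t in a..b, K t * (g t - M) := by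
    simp only [mul_sub]
    rw [integral_sub (hg.continuousOn_mul hK) (hK.intervalIntegrable.mul_const M),
      intervalIntegral.integral_mul_const, hK0, zero_mul, sub_zero]
  have hpointwise : (fun t => |K t * (g t - M)|) ≤ᵐ[volume.restrict (Icc a b)]
      fun t => C * (M - g t) := by
    rw [Filter.EventuallyLE, ae_restrict_iff' measurableSet_Icc]
    filter_upwards [hgM] with t hgt ht
    rw [abs_mul, abs_of_nonpos (sub_nonpos.2 (hgt ht)), neg_sub]
    exact mul_le_mul_of_nonneg_right (hKC t ht) (sub_nonneg.2 (hgt ht))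
  calc |∫ t in a..b, K t * g t| ≤ ∫ t in a..b, |K t * (g t - M)| :=
        hshift ▸ abs_integral_le_integral_abs hab
    _ ≤ ∫ t in a..b, C * (M - g t) :=
        integral_mono_ae_restrict hab ((hg.sub intervalIntegrable_const).continuousOn_mul hK).abs
          ((intervalIntegrable_const.sub hg).const_mul C) hpointwise
    _ = C * (M * (b - a) - ∫ t in a..b, g t) := by
        rw [intervalIntegral.integral_const_mul, integral_sub intervalIntegrable_const hg,
          intervalIntegral.integral_const, smul_eq_mul, mul_comm M]

section Boole

variable {a b : ℝ}

noncomputable def booleNodes (a b : ℝ) : Fin 5 → ℝ :=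
  ![a, (3 * a + b) / 4, (a + b) / 2, (a + 3 * b) / 4, b]

noncomputable def booleWeights (a b : ℝ) : Fin 5 → ℝ :=
  fun i => (b - a) / 90 * ![7, 32, 12, 32, 7] i

theorem sum_booleWeights_mul (φ : ℝ → ℝ) :
    ∑ i, booleWeights a b i * φ (booleNodes a b i) = (b - a) / 90 * (7 * φ a
      + 32 * φ ((3 * a + b) / 4) + 12 * φ ((a + b) / 2) + 32 * φ ((a + 3 * b) / 4) + 7 * φ b) := by
  simp only [booleWeights, booleNodes, Fin.sum_univ_five, Fin.isValue, Matrix.cons_val_zero,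
    Matrix.cons_val_one, Matrix.cons_val]
  ring

theorem sum_booleWeights : ∑ i, booleWeights a b i = b - a := by
  simpa using (sum_booleWeights_mul (a := a) (b := b) fun _ => 1).trans (by ring)

theorem sum_booleWeights_mul_sub :
    ∑ i, booleWeights a b i * (booleNodes a b i - a) = (b - a) ^ 2 / 2 := by
  rw [sum_booleWeights_mul fun y => y - a]
  ring

theorem booleNodes_mem (hab : a ≤ b) (i : Fin 5) : booleNodes a b i ∈ Icc a b := by
  fin_cases i <;>
    simp only [booleNodes, Fin.zero_eta, Fin.mk_one, Fin.reduceFinMk, Fin.isValue,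
      Matrix.cons_val_zero, Matrix.cons_val_one, Matrix.cons_val, mem_Icc] <;>
    constructor <;> linarith

theorem integral_peanoKernel_boole (hab : a ≤ b) :
    ∫ t in a..b, peanoKernel Finset.univ (booleWeights a b) (booleNodes a b) b t = 0 := by
  rw [integral_peanoKernel hab (fun i _ => booleNodes_mem hab i) sum_booleWeights
    sum_booleWeights_mul_sub, sum_booleWeights_mul fun y => (y - a) ^ 2 / 2]
  ring

/- Between consecutive nodes the kernel is a quadratic in `t`. Its maximum `17/1440 (b - a)²` is
attained at `(3a + b)/4` and `(a + 3b)/4`, its minimum `-(b - a)²/200` at `a + 13/30 (b - a)` and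
`a + 17/30 (b - a)`. -/
theorem abs_peanoKernel_boole_le {t : ℝ} (ht : t ∈ Icc a b) :
    |peanoKernel Finset.univ (booleWeights a b) (booleNodes a b) b t|
      ≤ 17 / 1440 * (b - a) ^ 2 := by
  obtain ⟨hat, htb⟩ := ht
  rw [peanoKernel, sum_booleWeights_mul fun y => max (y - t) 0,
    max_eq_right (show a - t ≤ 0 by linarith), max_eq_left (show 0 ≤ b - t by linarith), abs_le]
  rcases le_or_gt t ((3 * a + b) / 4) with h1 | h1
  · rw [max_eq_left (show 0 ≤ (3 * a + b) / 4 - t by linarith),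
      max_eq_left (show 0 ≤ (a + b) / 2 - t by linarith),
      max_eq_left (show 0 ≤ (a + 3 * b) / 4 - t by linarith)]
    constructor
    · nlinarith [sq_nonneg (t - a - 7 / 90 * (b - a))]
    · nlinarith [mul_nonneg (by linarith : (0 : ℝ) ≤ (3 * a + b) / 4 - t)
        (by linarith : (0 : ℝ) ≤ t - a + 17 / 180 * (b - a))]
  rw [max_eq_right (show (3 * a + b) / 4 - t ≤ 0 by linarith)]
  rcases le_or_gt t ((a + b) / 2) with h2 | h2
  · rw [max_eq_left (show 0 ≤ (a + b) / 2 - t by linarith),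
      max_eq_left (show 0 ≤ (a + 3 * b) / 4 - t by linarith)]
    constructor
    · nlinarith [sq_nonneg (t - a - 13 / 30 * (b - a))]
    · nlinarith [mul_nonneg (by linarith : (0 : ℝ) ≤ t - a - 1 / 4 * (b - a))
        (by linarith : (0 : ℝ) ≤ 37 / 60 * (b - a) - (t - a))]
  rw [max_eq_right (show (a + b) / 2 - t ≤ 0 by linarith)]
  rcases le_or_gt t ((a + 3 * b) / 4) with h3 | h3
  · rw [max_eq_left (show 0 ≤ (a + 3 * b) / 4 - t by linarith)]
    constructor
    · nlinarith [sq_nonneg (t - a - 17 / 30 * (b - a))]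
    · nlinarith [mul_nonneg (by linarith : (0 : ℝ) ≤ t - a - 23 / 60 * (b - a))
        (by linarith : (0 : ℝ) ≤ 3 / 4 * (b - a) - (t - a))]
  · rw [max_eq_right (show (a + 3 * b) / 4 - t ≤ 0 by linarith)]
    constructor
    · nlinarith [sq_nonneg (b - t - 7 / 90 * (b - a))]
    · nlinarith [mul_nonneg (by linarith : (0 : ℝ) ≤ t - (a + 3 * b) / 4)
        (by linarith : (0 : ℝ) ≤ b - t + 17 / 180 * (b - a))]

end Boole

theorem boole_bound_3 (a b M : ℝ) (hab : a < b) (f f' f'' : ℝ → ℝ)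
    (hderiv : ∀ x ∈ Set.Icc a b, HasDerivAt f (f' x) x)
    (hint : MeasureTheory.IntegrableOn f'' (Set.Icc a b))
    (hac : ∀ x ∈ Set.Icc a b, f' x - f' a = ∫ t in a..x, f'' t)
    (hbound : ∀ᵐ t, t ∈ Set.Icc a b → f'' t ≤ M) :
    |(∫ t in a..b, f t) - (b - a)/90 * (7*f a + 32*f ((3*a+b)/4) + 12*f ((a+b)/2) + 32*f ((a+3*b)/4) + 7*f b)| ≤ (17/1440 * (M - (f' b - f' a)/(b - a))) * (b - a)^3 := by
  have hf'' : IntervalIntegrable f'' volume a b :=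
    (intervalIntegrable_iff_integrableOn_Icc_of_le hab.le).2 hint
  rw [← sum_booleWeights_mul, integral_sub_sum_eq_integral_peanoKernel_mul hab.le
    (fun i _ => booleNodes_mem hab.le i) sum_booleWeights sum_booleWeights_mul_sub hderiv hf'' hac]
  calc _ ≤ 17 / 1440 * (b - a) ^ 2 * (M * (b - a) - ∫ t in a..b, f'' t) :=
        abs_integral_mul_le_of_integral_eq_zero hab.le
          (continuous_peanoKernel _ _ _ _).continuousOn (integral_peanoKernel_boole hab.le)
          (fun t ht => abs_peanoKernel_boole_le ht) hf'' hbound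
    _ = _ := by
        rw [← hac b ⟨hab.le, le_rfl⟩]
        field_simp [sub_ne_zero.2 hab.ne']
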